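/- Let $(X_n)$ be the minimal random walk with $q = 0$ and $1/2 < p < 1$, and let $M$ be the almost sure limit of $X_n/a_n - s$ where $a_n = \Gamma(n+p)/(\Gamma(n)\Gamma(1+p))$. Then $\mathbb{E}[M^2] = \frac{2s\,\Gamma(1+p)^2}{\Gamma(1+2p)} - s^2$. -/

import Mathlib

open MeasureTheory ProbabilityTheory Filter Real BoundedContinuousFunction

noncomputable section

/-- The minimal random walk of Kumar–Harbola–Lindenberg: increments `η n ∈ {0,1}`,
`P(η 1 = 1) = s`, and for `n ≥ 1` the conditional expectation (i.e. conditional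
probability of a forward step) given `σ(η 1, …, η n)` is `q + (p-q) X_n / n`,
where `X_n = ∑_{k=1}^n η k`. -/
structure IsMinimalRW {Ω : Type*} [MeasurableSpace Ω] (μ : Measure Ω)
    (p q s : ℝ) (η : ℕ → Ω → ℝ) : Prop where
  meas : ∀ n, Measurable (η n)
  zero : ∀ ω, η 0 ω = 0
  vals : ∀ n, 1 ≤ n → ∀ᵐ ω ∂μ, η n ω = 0 ∨ η n ω = 1
  init : (μ {ω | η 1 ω = 1}).toReal = s
  cond : ∀ n : ℕ, 1 ≤ n →
      μ[η (n + 1) | ⨆ i ∈ Finset.Icc 1 n, MeasurableSpace.comap (η i) inferInstance]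
        =ᵐ[μ] fun ω => q + (p - q) * (∑ k ∈ Finset.Icc 1 n, η k ω) / n

/-- The position of the walk, `X_n = ∑_{k=1}^n η_k`. -/
def walkPos {Ω : Type*} (η : ℕ → Ω → ℝ) (n : ℕ) (ω : Ω) : ℝ := ∑ k ∈ Finset.Icc 1 n, η k ω

/-- The normalizing sequence `a_n = Γ(n+α)/(Γ(n)Γ(1+α))`. -/
def aSeq (α : ℝ) (n : ℕ) : ℝ := Real.Gamma (n + α) / (Real.Gamma n * Real.Gamma (1 + α))

/-!
With `Y_n = X_n / a_n`, the relations `E[η_{n+1} | η_1, …, η_n] = p X_n / n` and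
`a_{n+1} = a_n (n + p) / n` make `(Y_n)_{n ≥ 1}` a martingale, so `Y_n - s` has orthogonal
increments in `L²`. Squaring `X_{n+1} = X_n + η_{n+1}` with `η² = η` gives the recursion solved by
`E[X_n²] = s (2 b_n - a_n)`, where `b_n` is `a_n` with `p` replaced by `2p`; hence
`E[(Y_n - s)²] = 2s b_n / a_n² - s / a_n - s²`, which tends to `2s Γ(1+p)² / Γ(1+2p) - s²` by
Euler's limit formula `Γ(α) = lim n^α n! / (α (α+1) ⋯ (α+n))`. A sequence with orthogonal
increments and convergent second moments is Cauchy in `L²`; its `L²` limit agrees a.e. with the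
a.s. limit `M`, so `E[M²]` is the limit of the second moments.
-/

open Topology
open scoped ENNReal InnerProductSpace

lemma Real.Gamma_add_nat_eq_mul_prod {a : ℝ} (ha : 0 < a) (n : ℕ) :
    Gamma (a + n) = Gamma a * ∏ j ∈ Finset.range n, (a + j) := by
  induction n with
  | zero => simp
  | succ n ih =>
    rw [Nat.cast_succ, ← add_assoc, Real.Gamma_add_one (by positivity : a + n ≠ 0), ih,
      Finset.prod_range_succ]
    ring

lemma aSeq_one {α : ℝ} (hα : -1 < α) : aSeq α 1 = 1 := by
  have : Gamma (1 + α) ≠ 0 := (Real.Gamma_pos_of_pos (by linarith)).ne'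
  simp [aSeq, this]

lemma aSeq_pos {α : ℝ} (hα : -1 < α) {n : ℕ} (hn : 1 ≤ n) : 0 < aSeq α n := by
  have hn' : (1 : ℝ) ≤ n := by exact_mod_cast hn
  unfold aSeq
  have := Real.Gamma_pos_of_pos (show 0 < (n : ℝ) + α by linarith)
  have := Real.Gamma_pos_of_pos (show 0 < (n : ℝ) by linarith)
  have := Real.Gamma_pos_of_pos (show 0 < 1 + α by linarith)
  positivity

lemma aSeq_succ {α : ℝ} (hα : -1 < α) {n : ℕ} (hn : 1 ≤ n) :
    aSeq α (n + 1) = aSeq α n * ((n + α) / n) := by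
  have hn' : (1 : ℝ) ≤ n := by exact_mod_cast hn
  have : Gamma (n : ℝ) ≠ 0 := (Real.Gamma_pos_of_pos (by linarith)).ne'
  simp only [aSeq, Nat.cast_succ, add_right_comm _ (1 : ℝ) α]
  rw [Real.Gamma_add_one (by linarith), Real.Gamma_add_one (by linarith)]
  field_simp

lemma aSeq_succ_eq_rpow_div_GammaSeq {α : ℝ} (hα : 0 < α) {n : ℕ} (hn : n ≠ 0) :
    aSeq α (n + 1) = n ^ α / (α * Real.GammaSeq α n) := by
  have hn' : (0 : ℝ) < n := by positivity
  have hprod : 0 < ∏ j ∈ Finset.range (n + 1), (α + j) := Finset.prod_pos fun j _ => by positivity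
  have hΓ := Real.Gamma_pos_of_pos hα
  have hnum : Gamma ((n + 1 : ℕ) + α) = Gamma α * ∏ j ∈ Finset.range (n + 1), (α + j) := by
    rw [add_comm, Real.Gamma_add_nat_eq_mul_prod hα]
  have hden : Gamma ((n + 1 : ℕ) : ℝ) = n.factorial := by
    rw [Nat.cast_succ, Real.Gamma_nat_eq_factorial]
  rw [aSeq, Real.GammaSeq, hnum, hden, add_comm 1 α, Real.Gamma_add_one hα.ne']
  field_simp

lemma tendsto_aSeq_succ_div_rpow {α : ℝ} (hα : 0 < α) :
    Tendsto (fun n : ℕ => aSeq α (n + 1) / n ^ α) atTop (𝓝 (Gamma (1 + α))⁻¹) := by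
  have hlim : Tendsto (fun n : ℕ => (α * Real.GammaSeq α n)⁻¹) atTop (𝓝 (Gamma (1 + α))⁻¹) := by
    rw [add_comm, Real.Gamma_add_one hα.ne']
    exact ((Real.GammaSeq_tendsto_Gamma α).const_mul α).inv₀
      (mul_pos hα (Real.Gamma_pos_of_pos hα)).ne'
  refine hlim.congr' ?_
  filter_upwards [eventually_ne_atTop 0] with n hn
  have : (0 : ℝ) < n ^ α := by positivity
  rw [aSeq_succ_eq_rpow_div_GammaSeq hα hn]
  field_simp

lemma tendsto_aSeq_atTop {α : ℝ} (hα : 0 < α) : Tendsto (aSeq α) atTop atTop := by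
  rw [← tendsto_add_atTop_iff_nat 1]
  have hpow : Tendsto (fun n : ℕ => (n : ℝ) ^ α) atTop atTop :=
    (tendsto_rpow_atTop hα).comp tendsto_natCast_atTop_atTop
  refine ((tendsto_aSeq_succ_div_rpow hα).pos_mul_atTop
    (inv_pos.2 (Real.Gamma_pos_of_pos (by linarith))) hpow).congr' ?_
  filter_upwards [eventually_ne_atTop 0] with n hn
  have : (0 : ℝ) < n ^ α := by positivity
  field_simp

lemma tendsto_aSeq_two_mul_div_sq {α : ℝ} (hα : 0 < α) :
    Tendsto (fun n => aSeq (2 * α) n / aSeq α n ^ 2) atTop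
      (𝓝 (Gamma (1 + α) ^ 2 / Gamma (1 + 2 * α))) := by
  rw [← tendsto_add_atTop_iff_nat 1]
  have hΓ := Real.Gamma_pos_of_pos (show 0 < 1 + α by linarith)
  have hlim := (tendsto_aSeq_succ_div_rpow (by positivity : 0 < 2 * α)).div
    ((tendsto_aSeq_succ_div_rpow hα).pow 2) (by positivity)
  rw [show (Gamma (1 + 2 * α))⁻¹ / (Gamma (1 + α))⁻¹ ^ 2 = Gamma (1 + α) ^ 2 / Gamma (1 + 2 * α) by
    field_simp] at hlim
  refine hlim.congr' ?_
  filter_upwards [eventually_ne_atTop 0] with n hn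
  have hn' : (0 : ℝ) < n := by positivity
  have : (0 : ℝ) < n ^ α := by positivity
  have hsq : (n : ℝ) ^ (2 * α) = ((n : ℝ) ^ α) ^ 2 := by
    rw [mul_comm, Real.rpow_mul hn'.le, Real.rpow_two]
  simp only [Pi.div_apply, hsq]
  field_simp

namespace MeasureTheory

variable {Ω : Type*} [MeasurableSpace Ω] {μ : Measure Ω}

lemma MemLp.inner_toLp_toLp {f g : Ω → ℝ} (hf : MemLp f 2 μ) (hg : MemLp g 2 μ) :
    ⟪hf.toLp f, hg.toLp g⟫_ℝ = ∫ ω, f ω * g ω ∂μ := by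
  rw [L2.inner_def]
  refine integral_congr_ae ?_
  filter_upwards [hf.coeFn_toLp, hg.coeFn_toLp] with ω hfω hgω
  simp only [hfω, hgω, RCLike.inner_apply, conj_trivial, mul_comm]

lemma Lp.norm_sq_eq_integral_sq (F : Lp ℝ 2 μ) : ‖F‖ ^ 2 = ∫ ω, F ω ^ 2 ∂μ := by
  rw [← real_inner_self_eq_norm_sq, L2.inner_def]
  simp [sq]

theorem integral_sq_eq_of_tendsto_of_orthogonal_increments {f : ℕ → Ω → ℝ} {g : Ω → ℝ} {W : ℝ}
    (hf : ∀ n, MemLp (f n) 2 μ)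
    (horth : ∀ n m, n ≤ m → ∫ ω, f n ω * (f m ω - f n ω) ∂μ = 0)
    (hW : Tendsto (fun n => ∫ ω, f n ω ^ 2 ∂μ) atTop (𝓝 W))
    (hg : ∀ᵐ ω ∂μ, Tendsto (fun n => f n ω) atTop (𝓝 (g ω))) :
    ∫ ω, g ω ^ 2 ∂μ = W := by
  set F := fun n => (hf n).toLp (f n)
  have hnorm : ∀ n, ‖F n‖ ^ 2 = ∫ ω, f n ω ^ 2 ∂μ := fun n => by
    rw [← real_inner_self_eq_norm_sq, MemLp.inner_toLp_toLp]
    simp only [sq]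
  have hdist : ∀ n m, n ≤ m → dist (F n) (F m) ^ 2 = ‖F m‖ ^ 2 - ‖F n‖ ^ 2 := by
    intro n m hnm
    have hinner : ⟪F n, F m - F n⟫_ℝ = 0 := by
      rw [← MemLp.toLp_sub, MemLp.inner_toLp_toLp]
      exact horth n m hnm
    have hpyth := norm_add_sq_eq_norm_sq_add_norm_sq_real hinner
    rw [add_sub_cancel] at hpyth
    rw [dist_comm, dist_eq_norm, sq, sq, hpyth]
    ring
  have hmono : Monotone fun n => ‖F n‖ ^ 2 := fun n m hnm => by
    linarith [hdist n m hnm, sq_nonneg (dist (F n) (F m))]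
  simp only [hnorm] at hdist hmono
  have hcauchy : CauchySeq F := by
    refine cauchySeq_of_le_tendsto_0' (fun n => √(W - ∫ ω, f n ω ^ 2 ∂μ)) (fun n m hnm => ?_) ?_
    · rw [← Real.sqrt_sq dist_nonneg, hdist n m hnm]
      exact Real.sqrt_le_sqrt (by linarith [hmono.ge_of_tendsto hW m])
    · simpa using ((tendsto_const_nhds (x := W)).sub hW).sqrt
  obtain ⟨G, hFG⟩ := cauchySeq_tendsto_of_complete hcauchy
  have hGg : (G : Ω → ℝ) =ᵐ[μ] g := by
    obtain ⟨ns, hns, hFGae⟩ := (tendstoInMeasure_of_tendsto_Lp hFG).exists_seq_tendsto_ae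
    have hFf : ∀ᵐ ω ∂μ, ∀ n, F n ω = f n ω := ae_all_iff.2 fun n => (hf n).coeFn_toLp
    filter_upwards [hFGae, hFf, hg] with ω hG hF hg
    refine tendsto_nhds_unique ?_ (hg.comp hns.tendsto_atTop)
    simpa only [hF, Function.comp_def] using hG
  have hlim : Tendsto (fun n => ‖F n‖ ^ 2) atTop (𝓝 (‖G‖ ^ 2)) := hFG.norm.pow 2
  simp only [hnorm] at hlim
  rw [← tendsto_nhds_unique hlim hW, Lp.norm_sq_eq_integral_sq]
  exact integral_congr_ae (hGg.mono fun ω hω => by simp only [hω])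

end MeasureTheory

abbrev walkSigma {Ω : Type*} (η : ℕ → Ω → ℝ) (n : ℕ) : MeasurableSpace Ω :=
  ⨆ i ∈ Finset.Icc 1 n, MeasurableSpace.comap (η i) inferInstance

section Walk

variable {Ω : Type*} {η : ℕ → Ω → ℝ}

lemma walkPos_succ (η : ℕ → Ω → ℝ) (n : ℕ) (ω : Ω) :
    walkPos η (n + 1) ω = walkPos η n ω + η (n + 1) ω :=
  Finset.sum_Icc_succ_top (by omega) _

lemma walkPos_one (η : ℕ → Ω → ℝ) : walkPos η 1 = η 1 := by
  funext ω
  simp [walkPos]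

lemma walkSigma_mono (η : ℕ → Ω → ℝ) : Monotone (walkSigma η) := fun n m hnm =>
  biSup_mono fun i hi => by simp only [Finset.mem_Icc] at hi ⊢; omega

lemma walkSigma_le [MeasurableSpace Ω] (hη : ∀ n, Measurable (η n)) (n : ℕ) :
    walkSigma η n ≤ ‹MeasurableSpace Ω› :=
  iSup₂_le fun i _ => (hη i).comap_le

lemma measurable_walkSigma {i n : ℕ} (hi : i ∈ Finset.Icc 1 n) :
    Measurable[walkSigma η n] (η i) :=
  (comap_measurable (η i)).mono
    (le_iSup₂ (f := fun i (_ : i ∈ Finset.Icc 1 n) => MeasurableSpace.comap (η i) _) i hi) le_rfl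

lemma measurable_walkPos_walkSigma (n : ℕ) : Measurable[walkSigma η n] (walkPos η n) :=
  Finset.measurable_sum _ fun _ hi => measurable_walkSigma hi

end Walk

namespace IsMinimalRW

variable {Ω : Type*} [MeasurableSpace Ω] {μ : Measure Ω} {p q s : ℝ} {η : ℕ → Ω → ℝ}

lemma ae_mem_Icc (hrw : IsMinimalRW μ p q s η) (i : ℕ) : ∀ᵐ ω ∂μ, η i ω ∈ Set.Icc (0 : ℝ) 1 := by
  rcases Nat.eq_zero_or_pos i with rfl | hi
  · exact ae_of_all _ fun ω => by simp [hrw.zero ω]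
  · filter_upwards [hrw.vals i hi] with ω hω
    rcases hω with h | h <;> simp [h]

lemma ae_abs_walkPos_le (hrw : IsMinimalRW μ p q s η) (n : ℕ) :
    ∀ᵐ ω ∂μ, |walkPos η n ω| ≤ n := by
  filter_upwards [ae_all_iff.2 hrw.ae_mem_Icc] with ω hω
  unfold walkPos
  rw [abs_of_nonneg (Finset.sum_nonneg fun i _ => (hω i).1)]
  calc ∑ k ∈ Finset.Icc 1 n, η k ω ≤ ∑ _ ∈ Finset.Icc 1 n, (1 : ℝ) :=
        Finset.sum_le_sum fun i _ => (hω i).2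
    _ = n := by simp

lemma memLp_top_incr (hrw : IsMinimalRW μ p q s η) (i : ℕ) : MemLp (η i) ∞ μ :=
  memLp_top_of_bound (hrw.meas i).aestronglyMeasurable 1 <| (hrw.ae_mem_Icc i).mono
    fun _ h => by rw [Real.norm_eq_abs, abs_le]; constructor <;> linarith [h.1, h.2]

lemma memLp_top_walkPos (hrw : IsMinimalRW μ p q s η) (n : ℕ) : MemLp (walkPos η n) ∞ μ :=
  memLp_top_of_bound ((measurable_walkPos_walkSigma n).mono (walkSigma_le hrw.meas n)
    le_rfl).aestronglyMeasurable n (hrw.ae_abs_walkPos_le n)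

lemma integral_incr_one (hrw : IsMinimalRW μ p q s η) : ∫ ω, η 1 ω ∂μ = s := by
  have hη : η 1 =ᵐ[μ] Set.indicator (η 1 ⁻¹' {1}) 1 := by
    filter_upwards [hrw.vals 1 le_rfl] with ω hω
    rcases hω with h | h <;> simp [h]
  rw [integral_congr_ae hη, integral_indicator_one ((hrw.meas 1) (measurableSet_singleton 1))]
  exact hrw.init

section FiniteMeasure

variable [IsFiniteMeasure μ]

lemma integrable_mul_incr (hrw : IsMinimalRW μ p q s η) {f : Ω → ℝ} (hfb : MemLp f ∞ μ)
    (i : ℕ) : Integrable (fun ω => f ω * η i ω) μ :=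
  hfb.integrable_mul (memLp_one_iff_integrable.2 ((hrw.memLp_top_incr i).integrable le_top))

lemma integrable_mul_walkPos (hrw : IsMinimalRW μ p q s η) {f : Ω → ℝ} (hfb : MemLp f ∞ μ)
    (n : ℕ) : Integrable (fun ω => f ω * walkPos η n ω) μ :=
  hfb.integrable_mul (memLp_one_iff_integrable.2 ((hrw.memLp_top_walkPos n).integrable le_top))

lemma integral_mul_incr_succ (hrw : IsMinimalRW μ p q s η) {n : ℕ} (hn : 1 ≤ n) {f : Ω → ℝ}
    (hf : StronglyMeasurable[walkSigma η n] f) (hfb : MemLp f ∞ μ) :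
    ∫ ω, f ω * η (n + 1) ω ∂μ =
      q * ∫ ω, f ω ∂μ + (p - q) / n * ∫ ω, f ω * walkPos η n ω ∂μ := by
  have hintη := (hrw.memLp_top_incr (n + 1)).integrable le_top
  calc ∫ ω, f ω * η (n + 1) ω ∂μ
      = ∫ ω, (μ[f * η (n + 1) | walkSigma η n]) ω ∂μ :=
        (integral_condExp (walkSigma_le hrw.meas n)).symm
    _ = ∫ ω, f ω * (q + (p - q) * walkPos η n ω / n) ∂μ := by
        refine integral_congr_ae ?_
        filter_upwards [condExp_mul_of_stronglyMeasurable_left hf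
          (hrw.integrable_mul_incr hfb _) hintη, hrw.cond n hn] with ω h1 h2
        rw [h1, Pi.mul_apply, h2]
        rfl
    _ = q * ∫ ω, f ω ∂μ + (p - q) / n * ∫ ω, f ω * walkPos η n ω ∂μ := by
        rw [← integral_const_mul, ← integral_const_mul,
          ← integral_add ((hfb.integrable le_top).const_mul q)
            ((hrw.integrable_mul_walkPos hfb n).const_mul _)]
        congr 1 with ω
        ring

lemma integral_mul_walkPos_eq (hrw : IsMinimalRW μ p 0 s η) (hp : 0 < p) {n m : ℕ}
    (hn : 1 ≤ n) (hnm : n ≤ m) {f : Ω → ℝ} (hf : StronglyMeasurable[walkSigma η n] f)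
    (hfb : MemLp f ∞ μ) :
    ∫ ω, f ω * walkPos η m ω ∂μ = aSeq p m / aSeq p n * ∫ ω, f ω * walkPos η n ω ∂μ := by
  induction m, hnm using Nat.le_induction with
  | base => rw [div_self (aSeq_pos (by linarith) hn).ne', one_mul]
  | succ m hnm ih =>
    have hm : 1 ≤ m := hn.trans hnm
    have hm' : (0 : ℝ) < m := by exact_mod_cast hm
    have hstep := hrw.integral_mul_incr_succ hm (hf.mono (walkSigma_mono η hnm)) hfb
    rw [zero_mul, zero_add, sub_zero] at hstep
    calc ∫ ω, f ω * walkPos η (m + 1) ω ∂μ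
        = ∫ ω, f ω * walkPos η m ω ∂μ + ∫ ω, f ω * η (m + 1) ω ∂μ := by
          simp_rw [walkPos_succ, mul_add]
          exact integral_add (hrw.integrable_mul_walkPos hfb m) (hrw.integrable_mul_incr hfb _)
      _ = aSeq p (m + 1) / aSeq p n * ∫ ω, f ω * walkPos η n ω ∂μ := by
          rw [hstep, ih, aSeq_succ (by linarith) hm]
          field_simp

lemma integral_mul_walkPos_div_aSeq_sub_eq_zero (hrw : IsMinimalRW μ p 0 s η) (hp : 0 < p)
    {n m : ℕ} (hn : 1 ≤ n) (hnm : n ≤ m) {f : Ω → ℝ} (hf : StronglyMeasurable[walkSigma η n] f)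
    (hfb : MemLp f ∞ μ) :
    ∫ ω, f ω * (walkPos η m ω / aSeq p m - walkPos η n ω / aSeq p n) ∂μ = 0 := by
  have ha := aSeq_pos (by linarith) hn
  have ha' := aSeq_pos (α := p) (by linarith) (hn.trans hnm)
  simp_rw [mul_sub, ← mul_div_assoc]
  rw [integral_sub ((hrw.integrable_mul_walkPos hfb m).div_const _)
    ((hrw.integrable_mul_walkPos hfb n).div_const _), integral_div, integral_div,
    hrw.integral_mul_walkPos_eq hp hn hnm hf hfb]
  field_simp
  ring

lemma integral_walkPos (hrw : IsMinimalRW μ p 0 s η) (hp : 0 < p) {n : ℕ} (hn : 1 ≤ n) :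
    ∫ ω, walkPos η n ω ∂μ = s * aSeq p n := by
  have h := hrw.integral_mul_walkPos_eq hp le_rfl hn stronglyMeasurable_const (memLp_top_const 1)
  simp only [one_mul, walkPos_one, aSeq_one (show -1 < p by linarith), div_one] at h
  rw [h, hrw.integral_incr_one, mul_comm]

lemma integral_walkPos_sq (hrw : IsMinimalRW μ p 0 s η) (hp : 0 < p) {n : ℕ} (hn : 1 ≤ n) :
    ∫ ω, walkPos η n ω ^ 2 ∂μ = s * (2 * aSeq (2 * p) n - aSeq p n) := by
  have hsq : ∀ i, 1 ≤ i → ∀ᵐ ω ∂μ, η i ω ^ 2 = η i ω := fun i hi =>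
    (hrw.vals i hi).mono fun ω h => by rcases h with h | h <;> simp [h]
  induction n, hn using Nat.le_induction with
  | base =>
    rw [walkPos_one, integral_congr_ae (hsq 1 le_rfl), hrw.integral_incr_one,
      aSeq_one (show -1 < p by linarith), aSeq_one (show -1 < 2 * p by linarith)]
    ring
  | succ n hn ih =>
    have hn' : (0 : ℝ) < n := by exact_mod_cast hn
    have hX := (measurable_walkPos_walkSigma (η := η) n).stronglyMeasurable
    have hcross := hrw.integral_mul_incr_succ hn hX (hrw.memLp_top_walkPos n)
    have hincr := hrw.integral_mul_incr_succ hn stronglyMeasurable_const (memLp_top_const 1)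
    simp only [zero_mul, zero_add, sub_zero, one_mul, ← sq] at hcross hincr
    have hexpand : ∀ᵐ ω ∂μ, walkPos η (n + 1) ω ^ 2 =
        walkPos η n ω ^ 2 + 2 * (walkPos η n ω * η (n + 1) ω) + η (n + 1) ω :=
      (hsq (n + 1) (by omega)).mono fun ω h => by rw [walkPos_succ]; linear_combination h
    have hintX2 : Integrable (fun ω => walkPos η n ω ^ 2) μ := by
      simpa only [← sq] using hrw.integrable_mul_walkPos (hrw.memLp_top_walkPos n) n
    have hintXη : Integrable (fun ω => 2 * (walkPos η n ω * η (n + 1) ω)) μ :=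
      (hrw.integrable_mul_incr (hrw.memLp_top_walkPos n) _).const_mul 2
    have hint : Integrable (fun ω => walkPos η n ω ^ 2 + 2 * (walkPos η n ω * η (n + 1) ω)) μ :=
      hintX2.add hintXη
    rw [integral_congr_ae hexpand,
      integral_add hint ((hrw.memLp_top_incr _).integrable le_top), integral_add hintX2 hintXη,
      integral_const_mul, hcross, hincr, ih, hrw.integral_walkPos hp hn,
      aSeq_succ (by linarith) hn, aSeq_succ (by linarith) hn]
    field_simp
    ring

end FiniteMeasure

lemma integral_walkPos_div_aSeq_sub_sq [IsProbabilityMeasure μ] (hrw : IsMinimalRW μ p 0 s η)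
    (hp : 0 < p) {n : ℕ} (hn : 1 ≤ n) :
    ∫ ω, (walkPos η n ω / aSeq p n - s) ^ 2 ∂μ =
      2 * s * (aSeq (2 * p) n / aSeq p n ^ 2) - s / aSeq p n - s ^ 2 := by
  have ha := aSeq_pos (α := p) (by linarith) hn
  have hintX := (hrw.memLp_top_walkPos n).integrable le_top
  have hintX2 : Integrable (fun ω => walkPos η n ω ^ 2) μ := by
    simpa only [← sq] using hrw.integrable_mul_walkPos (hrw.memLp_top_walkPos n) n
  calc ∫ ω, (walkPos η n ω / aSeq p n - s) ^ 2 ∂μ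
      = ∫ ω, (walkPos η n ω ^ 2 / aSeq p n ^ 2 - 2 * s / aSeq p n * walkPos η n ω) + s ^ 2 ∂μ :=
        integral_congr_ae (ae_of_all _ fun ω => by ring)
    _ = (∫ ω, walkPos η n ω ^ 2 ∂μ) / aSeq p n ^ 2
          - 2 * s / aSeq p n * ∫ ω, walkPos η n ω ∂μ + s ^ 2 := by
        have hint1 : Integrable (fun ω => walkPos η n ω ^ 2 / aSeq p n ^ 2) μ :=
          hintX2.div_const _
        have hint2 : Integrable (fun ω => 2 * s / aSeq p n * walkPos η n ω) μ :=
          hintX.const_mul _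
        have hint12 : Integrable (fun ω => walkPos η n ω ^ 2 / aSeq p n ^ 2
            - 2 * s / aSeq p n * walkPos η n ω) μ := hint1.sub hint2
        rw [integral_add hint12 (integrable_const _), integral_sub hint1 hint2, integral_div,
          integral_const_mul, integral_const, probReal_univ, one_smul]
    _ = 2 * s * (aSeq (2 * p) n / aSeq p n ^ 2) - s / aSeq p n - s ^ 2 := by
        rw [hrw.integral_walkPos_sq hp hn, hrw.integral_walkPos hp hn]
        field_simp
        ring

end IsMinimalRW

theorem minimalRW_q0_limit_second_moment_general {Ω : Type*} [MeasurableSpace Ω] (μ : Measure Ω)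
    [IsProbabilityMeasure μ] (p s : ℝ) (hp0 : 1 / 2 < p) (η : ℕ → Ω → ℝ)
    (hrw : IsMinimalRW μ p 0 s η) (M : Ω → ℝ)
    (hM : ∀ᵐ ω ∂μ, Tendsto (fun n : ℕ => walkPos η n ω / aSeq p n - s) atTop (nhds (M ω))) :
    ∫ ω, (M ω) ^ 2 ∂μ = 2 * s * Real.Gamma (1 + p) ^ 2 / Real.Gamma (1 + 2 * p) - s ^ 2 := by
  have hp : 0 < p := by linarith
  have hlim : Tendsto (fun n => 2 * s * (aSeq (2 * p) n / aSeq p n ^ 2) - s / aSeq p n - s ^ 2)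
      atTop (𝓝 (2 * s * (Real.Gamma (1 + p) ^ 2 / Real.Gamma (1 + 2 * p)) - s ^ 2)) := by
    have := (((tendsto_aSeq_two_mul_div_sq hp).const_mul (2 * s)).sub
      ((tendsto_aSeq_atTop hp).inv_tendsto_atTop.const_mul s)).sub_const (s ^ 2)
    simpa only [mul_zero, sub_zero, div_eq_mul_inv, Pi.inv_apply] using this
  have hbdd : ∀ k, MemLp (fun ω => walkPos η (k + 1) ω / aSeq p (k + 1) - s) ∞ μ := fun k => by
    simp only [div_eq_mul_inv]
    exact ((hrw.memLp_top_walkPos _).mul_const _).sub (memLp_const s)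
  rw [mul_div_assoc]
  refine integral_sq_eq_of_tendsto_of_orthogonal_increments
    (f := fun k ω => walkPos η (k + 1) ω / aSeq p (k + 1) - s)
    (fun k => (hbdd k).mono_exponent le_top)
    (fun k l hkl => ?_) ?_ (hM.mono fun ω h => (tendsto_add_atTop_iff_nat 1).2 h)
  · simpa only [sub_sub_sub_cancel_right] using hrw.integral_mul_walkPos_div_aSeq_sub_eq_zero hp
      (by omega) (by omega : k + 1 ≤ l + 1)
      (((measurable_walkPos_walkSigma _).div_const _).sub_const s).stronglyMeasurable (hbdd k)
  · exact ((tendsto_add_atTop_iff_nat 1).2 hlim).congr fun k =>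
      (hrw.integral_walkPos_div_aSeq_sub_sq hp (by omega)).symm

/-- Second moment of the limit `M` of `X_n/a_n - s` for `q = 0`, `1/2 < p < 1`. -/
theorem minimalRW_q0_limit_second_moment {Ω : Type*} [MeasurableSpace Ω] (μ : Measure Ω)
    [IsProbabilityMeasure μ] (p s : ℝ) (hp0 : 1 / 2 < p) (hp1 : p < 1)
    (hs : s ∈ Set.Icc (0:ℝ) 1) (η : ℕ → Ω → ℝ) (hrw : IsMinimalRW μ p 0 s η)
    (M : Ω → ℝ)
    (hM : ∀ᵐ ω ∂μ, Tendsto (fun n : ℕ => walkPos η n ω / aSeq p n - s) atTop (nhds (M ω))) :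
    ∫ ω, (M ω) ^ 2 ∂μ = 2 * s * Real.Gamma (1 + p) ^ 2 / Real.Gamma (1 + 2 * p) - s ^ 2 :=
  minimalRW_q0_limit_second_moment_general μ p s hp0 η hrw M hM
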